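/- arXiv:2004.02586 — 4 statements merged into one kernel-verified Lean document; each statement's English description precedes it below -/
import Mathlib

section
/- Let Ω be a real diagonal n×n matrix with diagonal entries α_1,…,α_n, let B be a real n×m matrix, let 1 ≤ μ ≤ n, and let s_e ∈ ℝ be such that s_e ≠ α_k for all k. Let V_μ ⊆ ℝⁿ be the span of the first μ standard basis vectors, let B_ν be the matrix obtained from B by replacing its first μ rows by zeros, let 𝒱_k ⊆ ℝⁿ be the span of the columns of (s_e·I − Ω)^{-1}B, and let 𝒱_{νk} ⊆ ℝⁿ be the span of the columns of (s_e·I − Ω)^{-1}B_ν. Then V_μ + 𝒱_k = V_μ + 𝒱_{νk} and V_μ ∩ 𝒱_{νk} = {0}; that is, the Krylov Modal Subspace V_μ + 𝒱_k is the (internal) direct sum of V_μ and 𝒱_{νk}. -/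
/-!
In modal coordinates the resolvent `(s_e I - Ω)⁻¹` is a diagonal matrix (whether or not it is
invertible, since Mathlib inverts a diagonal matrix entrywise), and left multiplication by a
diagonal matrix acts row by row. Hence each column of `(s_e I - Ω)⁻¹ B` differs from the
corresponding column of `(s_e I - Ω)⁻¹ B_ν` only in the first `μ` coordinates, i.e. by a vector
of `V_μ`, which gives the equality of the sums; and the columns of `(s_e I - Ω)⁻¹ B_ν` vanish in
the first `μ` coordinates, while vectors of `V_μ` vanish in the others.
-/

open Matrix Submodule

section VanishingOn

variable (R : Type*) {ι : Type*} [Semiring R]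

def vanishingOn (s : Set ι) : Submodule R (ι → R) :=
  Submodule.pi s fun _ => ⊥

variable {R}

theorem mem_vanishingOn {s : Set ι} {v : ι → R} : v ∈ vanishingOn R s ↔ ∀ i ∈ s, v i = 0 := by
  simp only [vanishingOn, Submodule.mem_pi, Submodule.mem_bot]

theorem disjoint_vanishingOn_compl (s : Set ι) :
    Disjoint (vanishingOn R sᶜ) (vanishingOn R s) := by
  refine disjoint_iff_inf_le.mpr fun v ⟨hc, hs⟩ => (Submodule.mem_bot R).mpr (funext fun i => ?_)
  by_cases hi : i ∈ s
  · exact mem_vanishingOn.mp hs i hi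
  · exact mem_vanishingOn.mp hc i hi

theorem span_single_one_eq_vanishingOn_compl [Fintype ι] [DecidableEq ι] (s : Set ι) :
    span R ((fun i => Pi.single i (1 : R)) '' s) = vanishingOn R sᶜ := by
  apply le_antisymm
  · rw [span_le]
    rintro _ ⟨i, hi, rfl⟩
    exact mem_vanishingOn.mpr fun j hj => Pi.single_eq_of_ne (ne_of_mem_of_not_mem hi hj).symm _
  · intro v hv
    rw [← Finset.univ_sum_single v]
    refine sum_mem fun i _ => ?_
    by_cases hi : i ∈ s
    · have hsingle : Pi.single i (v i) = v i • Pi.single i (1 : R) := by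
        rw [← Pi.single_smul', smul_eq_mul, mul_one]
      rw [hsingle]
      exact smul_mem _ _ (subset_span ⟨i, hi, rfl⟩)
    · rw [mem_vanishingOn.mp hv i hi, Pi.single_zero]
      exact zero_mem _

theorem transpose_diagonal_mul_mem_vanishingOn {κ : Type*} [Fintype ι] [DecidableEq ι]
    (d : ι → R) {B : Matrix ι κ R} {s : Set ι} (hB : ∀ i ∈ s, ∀ j, B i j = 0) (j : κ) :
    (diagonal d * B)ᵀ j ∈ vanishingOn R s :=
  mem_vanishingOn.mpr fun i hi => by simp [diagonal_mul, hB i hi j]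

end VanishingOn

theorem sup_span_range_eq_of_sub_mem {R M κ : Type*} [Ring R] [AddCommGroup M] [Module R M]
    {W : Submodule R M} {f g : κ → M} (h : ∀ j, f j - g j ∈ W) :
    W ⊔ span R (Set.range f) = W ⊔ span R (Set.range g) := by
  have hle : ∀ f g : κ → M, (∀ j, f j - g j ∈ W) →
      W ⊔ span R (Set.range f) ≤ W ⊔ span R (Set.range g) := by
    refine fun f g h => sup_le le_sup_left (span_le.mpr ?_)
    rintro _ ⟨j, rfl⟩
    rw [← sub_add_cancel (f j) (g j)]
    exact add_mem (mem_sup_left (h j)) (mem_sup_right (subset_span ⟨j, rfl⟩))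
  exact le_antisymm (hle f g h) (hle g f fun j => by simpa using neg_mem (h j))

theorem kms_direct_sum_general (n m : ℕ) (α : Fin n → ℝ) (B : Matrix (Fin n) (Fin m) ℝ)
    (μ : ℕ)
    (se : ℝ)
    (Bν : Matrix (Fin n) (Fin m) ℝ)
    (hBν : ∀ i j, Bν i j = if (i : ℕ) < μ then 0 else B i j)
    (Vμ 𝒱k 𝒱νk : Submodule ℝ (Fin n → ℝ))
    (hVμ : Vμ = Submodule.span ℝ
      {v | ∃ i : Fin n, (i : ℕ) < μ ∧ v = Pi.single i (1 : ℝ)})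
    (h𝒱k : 𝒱k = Submodule.span ℝ
      (Set.range (((se • (1 : Matrix (Fin n) (Fin n) ℝ) - Matrix.diagonal α)⁻¹ * B)ᵀ)))
    (h𝒱νk : 𝒱νk = Submodule.span ℝ
      (Set.range (((se • (1 : Matrix (Fin n) (Fin n) ℝ) - Matrix.diagonal α)⁻¹ * Bν)ᵀ))) :
    Vμ ⊔ 𝒱k = Vμ ⊔ 𝒱νk ∧ Vμ ⊓ 𝒱νk = ⊥ := by
  set low : Set (Fin n) := {i | (i : ℕ) < μ}
  set d : Fin n → ℝ := Ring.inverse fun i => se - α i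
  have hVμ_eq : Vμ = vanishingOn ℝ lowᶜ := by
    rw [hVμ, ← span_single_one_eq_vanishingOn_compl]
    congr 1
    ext v
    simp [low, eq_comm]
  have hresolvent : (se • (1 : Matrix (Fin n) (Fin n) ℝ) - diagonal α)⁻¹ = diagonal d := by
    rw [smul_one_eq_diagonal, diagonal_sub, inv_diagonal]
  have hBν_low : ∀ i ∈ low, ∀ j, Bν i j = 0 := fun i hi j => by
    simp [hBν, show (i : ℕ) < μ from hi]
  have hB_sub_Bν_high : ∀ i ∈ lowᶜ, ∀ j, (B - Bν) i j = 0 := fun i hi j => by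
    simp [hBν, show ¬(i : ℕ) < μ from hi]
  rw [hVμ_eq, h𝒱k, h𝒱νk, hresolvent]
  refine ⟨sup_span_range_eq_of_sub_mem fun j => ?_, disjoint_iff.mp ?_⟩
  · have hcol := transpose_diagonal_mul_mem_vanishingOn d hB_sub_Bν_high j
    rwa [Matrix.mul_sub, transpose_sub] at hcol
  · refine (disjoint_vanishingOn_compl low).mono_right (span_le.mpr ?_)
    rintro _ ⟨j, rfl⟩
    exact transpose_diagonal_mul_mem_vanishingOn d hBν_low j

/-- **Fact 1 (KMS direct sum decomposition), in modal coordinates.**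
With `Ω = diagonal α`, `V_μ` the span of the first `μ` standard basis vectors,
`𝒱_k` the span of the columns of `(s_e·I − Ω)⁻¹ B`, and `𝒱_{νk}` the span of the
columns of `(s_e·I − Ω)⁻¹ B_ν` (where `B_ν` is `B` with its first `μ` rows zeroed),
we have `V_μ + 𝒱_k = V_μ + 𝒱_{νk}` and `V_μ ∩ 𝒱_{νk} = {0}`. -/
theorem kms_direct_sum (n m : ℕ) (α : Fin n → ℝ) (B : Matrix (Fin n) (Fin m) ℝ)
    (μ : ℕ) (hμ1 : 1 ≤ μ) (hμn : μ ≤ n)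
    (se : ℝ) (hse : ∀ k, se ≠ α k)
    (Bν : Matrix (Fin n) (Fin m) ℝ)
    (hBν : ∀ i j, Bν i j = if (i : ℕ) < μ then 0 else B i j)
    (Vμ 𝒱k 𝒱νk : Submodule ℝ (Fin n → ℝ))
    (hVμ : Vμ = Submodule.span ℝ
      {v | ∃ i : Fin n, (i : ℕ) < μ ∧ v = Pi.single i (1 : ℝ)})
    (h𝒱k : 𝒱k = Submodule.span ℝ
      (Set.range (((se • (1 : Matrix (Fin n) (Fin n) ℝ) - Matrix.diagonal α)⁻¹ * B)ᵀ)))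
    (h𝒱νk : 𝒱νk = Submodule.span ℝ
      (Set.range (((se • (1 : Matrix (Fin n) (Fin n) ℝ) - Matrix.diagonal α)⁻¹ * Bν)ᵀ))) :
    Vμ ⊔ 𝒱k = Vμ ⊔ 𝒱νk ∧ Vμ ⊓ 𝒱νk = ⊥ :=
  kms_direct_sum_general n m α B μ se Bν hBν Vμ 𝒱k 𝒱νk hVμ h𝒱k h𝒱νk
end

section
/- Let n ≥ 1, let b_1,…,b_n be real numbers, let ω_1,…,ω_n be positive reals, and let S ⊆ {1,…,n}. Then for every real ω, |Σ_{k∈S} b_k²/(iω + ω_k)| ≤ |Σ_{k=1}^{n} b_k²/(iω + ω_k)|, where i is the imaginary unit. In particular, if the full sum is nonzero, the magnitude of the modal error term e_μ(iω) = (Σ_{k∉S} b_k²/(iω+ω_k))/(Σ_{k=1}^{n} b_k²/(iω+ω_k)) is bounded by 1 for all real ω. -/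
/-!
Write `b_k²/(iω + ω_k) = b_k² • (iω + ω_k)⁻¹`. For `a₁, a₂ ≥ 0` the real inner product of
`(iω + a₁)⁻¹` and `(iω + a₂)⁻¹` is `(a₁a₂ + ω²)/(|iω + a₁|²|iω + a₂|²) ≥ 0`, so the modal terms are
pairwise at non-obtuse angles. Then the partial sum over `S` and the one over its complement have
nonnegative inner product, and adding the second to the first cannot decrease the norm.
-/

open Complex Finset

open scoped ComplexConjugate InnerProductSpace

section InnerNonneg

variable {F : Type*} [NormedAddCommGroup F] [InnerProductSpace ℝ F]

theorem norm_le_norm_add_of_inner_nonneg {x y : F} (h : 0 ≤ ⟪x, y⟫_ℝ) : ‖x‖ ≤ ‖x + y‖ := by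
  have hsq : ‖x‖ ^ 2 ≤ ‖x + y‖ ^ 2 := by
    rw [norm_add_sq_real]
    nlinarith [sq_nonneg ‖y‖]
  exact (sq_le_sq₀ (norm_nonneg _) (norm_nonneg _)).1 hsq

theorem norm_sum_le_norm_sum_of_inner_nonneg {ι : Type*} [Fintype ι] [DecidableEq ι]
    {f : ι → F} (hf : ∀ i j, 0 ≤ ⟪f i, f j⟫_ℝ) (S : Finset ι) :
    ‖∑ i ∈ S, f i‖ ≤ ‖∑ i, f i‖ := by
  have hinner : 0 ≤ ⟪∑ i ∈ S, f i, ∑ j ∈ Sᶜ, f j⟫_ℝ := by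
    rw [sum_inner]
    exact sum_nonneg fun i _ => by
      rw [inner_sum]
      exact sum_nonneg fun j _ => hf i j
  rw [← sum_add_sum_compl S f]
  exact norm_le_norm_add_of_inner_nonneg hinner

end InnerNonneg

theorem Complex.inner_inv_I_mul_add_nonneg (w : ℝ) {a₁ a₂ : ℝ} (ha₁ : 0 ≤ a₁) (ha₂ : 0 ≤ a₂) :
    0 ≤ ⟪(I * w + a₁)⁻¹, (I * w + a₂)⁻¹⟫_ℝ := by
  have hprod : (I * w + a₂) * conj (I * w + a₁) =
      ((a₁ * a₂ + w ^ 2 : ℝ) : ℂ) + ((w * (a₁ - a₂) : ℝ) : ℂ) * I := by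
    apply Complex.ext <;> simp [sq] <;> ring
  rw [Complex.inner, map_inv₀, ← mul_inv, hprod, inv_re]
  apply div_nonneg
  · rw [add_re, ofReal_re, mul_I_re, ofReal_im, neg_zero, add_zero]
    positivity
  · exact normSq_nonneg _

theorem kms_modal_error_bound_general (n : ℕ) (b ω : Fin n → ℝ)
    (hω : ∀ k, 0 < ω k) (S : Finset (Fin n)) (w : ℝ) :
    ‖∑ k ∈ S, ((b k : ℂ)) ^ 2 / (Complex.I * w + (ω k : ℂ))‖ ≤
      ‖∑ k, ((b k : ℂ)) ^ 2 / (Complex.I * w + (ω k : ℂ))‖ ∧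
    ((∑ k, ((b k : ℂ)) ^ 2 / (Complex.I * w + (ω k : ℂ))) ≠ 0 →
      ‖(∑ k ∈ Sᶜ, ((b k : ℂ)) ^ 2 / (Complex.I * w + (ω k : ℂ))) /
          (∑ k, ((b k : ℂ)) ^ 2 / (Complex.I * w + (ω k : ℂ)))‖ ≤ 1) := by
  have hterm : ∀ k, ((b k : ℂ)) ^ 2 / (I * w + (ω k : ℂ)) = (b k ^ 2) • (I * w + (ω k : ℂ))⁻¹ :=
    fun k => by rw [Complex.real_smul, div_eq_mul_inv, ofReal_pow]
  have hpair : ∀ k j, 0 ≤ ⟪((b k : ℂ)) ^ 2 / (I * w + (ω k : ℂ)),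
      ((b j : ℂ)) ^ 2 / (I * w + (ω j : ℂ))⟫_ℝ := fun k j => by
    rw [hterm, hterm, real_inner_smul_left, real_inner_smul_right]
    exact mul_nonneg (sq_nonneg _)
      (mul_nonneg (sq_nonneg _) (inner_inv_I_mul_add_nonneg w (hω k).le (hω j).le))
  have hpartial := fun T => norm_sum_le_norm_sum_of_inner_nonneg hpair T
  refine ⟨hpartial S, fun hne => ?_⟩
  rw [norm_div, div_le_one (norm_pos_iff.mpr hne)]
  exact hpartial Sᶜ

/-- **Fact 3 (modal error bound), concrete form.** For positive pole magnitudes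
`ω_k` the magnitude of any partial sum `Σ_{k∈S} b_k²/(iω+ω_k)` is bounded by the
magnitude of the full sum; in particular the modal error term
`e_μ(iω) = h_ν(iω)/h(iω)` has magnitude at most 1. -/
theorem kms_modal_error_bound (n : ℕ) (hn : 1 ≤ n) (b ω : Fin n → ℝ)
    (hω : ∀ k, 0 < ω k) (S : Finset (Fin n)) (w : ℝ) :
    ‖∑ k ∈ S, ((b k : ℂ)) ^ 2 / (Complex.I * w + (ω k : ℂ))‖ ≤
      ‖∑ k, ((b k : ℂ)) ^ 2 / (Complex.I * w + (ω k : ℂ))‖ ∧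
    ((∑ k, ((b k : ℂ)) ^ 2 / (Complex.I * w + (ω k : ℂ))) ≠ 0 →
      ‖(∑ k ∈ Sᶜ, ((b k : ℂ)) ^ 2 / (Complex.I * w + (ω k : ℂ))) /
          (∑ k, ((b k : ℂ)) ^ 2 / (Complex.I * w + (ω k : ℂ)))‖ ≤ 1) :=
  kms_modal_error_bound_general n b ω hω S w
end

section
/- (Weyl's inequality.) Let M and N be real symmetric (or complex Hermitian) n×n matrices and let S = M + N. Let α_1 ≥ α_2 ≥ … ≥ α_n, β_1 ≥ β_2 ≥ … ≥ β_n, and γ_1 ≥ γ_2 ≥ … ≥ γ_n denote the eigenvalues of M, N, and S respectively, listed in decreasing order with multiplicity. Then for all indices i ≤ j, γ_j ≤ α_i + β_{j−i+1}. -/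
/-!
Pick orthonormal eigenbases of `M`, `N` and `S = M + N` ordered compatibly with `α`, `β`, `γ`.
The eigenvectors of `M` with index `≥ i`, those of `N` with index `≥ j - i`, and those of `S`
with index `≤ j` span subspaces of dimensions `n - i`, `n - (j - i)` and `j + 1`, which add up
to `2n + 1`; so the three subspaces share a nonzero vector `x`. On these subspaces the Rayleigh
quotient is bounded by `α i`, by `β (j - i)` and from below by `γ j` respectively, whence
`γ j ≤ ⟪x, S x⟫ = ⟪x, M x⟫ + ⟪x, N x⟫ ≤ α i + β (j - i)`.
-/

open Matrix Finset
open scoped RealInnerProductSpace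

theorem Fintype.exists_perm_comp_eq_of_map_univ_eq {ι β : Type*} [Fintype ι] [DecidableEq β]
    {f g : ι → β} (h : univ.val.map f = univ.val.map g) : ∃ σ : Equiv.Perm ι, g ∘ σ = f := by
  have hfiber (c : β) : Fintype.card {a // f a = c} = Fintype.card {a // g a = c} := by
    simpa [Fintype.card_subtype, Multiset.count_map, eq_comm, Finset.card_def] using
      congrArg (Multiset.count c) h
  exact ⟨Equiv.ofFiberEquiv fun c ↦ Fintype.equivOfCardEq (hfiber c),
    funext (Equiv.ofFiberEquiv_map _)⟩

theorem Submodule.exists_mem_inf_inf_ne_zero_of_finrank_lt {K V : Type*} [DivisionRing K]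
    [AddCommGroup V] [Module K V] [FiniteDimensional K V] (U W X : Submodule K V)
    (h : 2 * Module.finrank K V < Module.finrank K U + Module.finrank K W + Module.finrank K X) :
    ∃ x ∈ U ⊓ W ⊓ X, x ≠ 0 := by
  have finrank_inf_ge (P Q : Submodule K V) :
      Module.finrank K P + Module.finrank K Q ≤ Module.finrank K ↑(P ⊓ Q) + Module.finrank K V :=
    (P.finrank_sup_add_finrank_inf_eq Q).symm.le.trans
      (by have := (P ⊔ Q).finrank_le; omega)
  have := finrank_inf_ge U W
  have := finrank_inf_ge (U ⊓ W) X
  exact (Submodule.ne_bot_iff _).mp (Submodule.one_le_finrank_iff.mp (by omega))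

namespace OrthonormalBasis

variable {ι E : Type*} [Fintype ι] [NormedAddCommGroup E] [InnerProductSpace ℝ E]
  (b : OrthonormalBasis ι ℝ E) {T : E →ₗ[ℝ] E} {μ : ι → ℝ}

theorem finrank_span_image (s : Finset ι) :
    Module.finrank ℝ (Submodule.span ℝ (b '' s)) = #s := by
  have hli : LinearIndependent ℝ (b ∘ (Subtype.val : ↥(s : Set ι) → ι)) :=
    b.orthonormal.linearIndependent.comp _ Subtype.val_injective
  rw [← Subtype.range_coe (s := (s : Set ι)), ← Set.range_comp, finrank_span_eq_card hli]
  simp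

theorem inner_eq_zero_of_mem_span_image {s : Set ι} {x : E} (hx : x ∈ Submodule.span ℝ (b '' s))
    {k : ι} (hk : k ∉ s) : ⟪b k, x⟫ = 0 := by
  have hspan : Submodule.span ℝ (b '' s) ≤ (ℝ ∙ b k)ᗮ := by
    refine Submodule.span_le.mpr ?_
    rintro _ ⟨m, hm, rfl⟩
    exact Submodule.mem_orthogonal_singleton_iff_inner_right.mpr
      (b.orthonormal.2 (ne_of_mem_of_not_mem hm hk).symm)
  exact Submodule.mem_orthogonal_singleton_iff_inner_right.mp (hspan hx)

theorem inner_self_apply_eq_sum (hT : ∀ k, T (b k) = μ k • b k) (x : E) :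
    ⟪x, T x⟫ = ∑ k, μ k * ⟪b k, x⟫ ^ 2 := by
  have hTx : T x = ∑ k, (μ k * ⟪b k, x⟫) • b k := by
    conv_lhs => rw [← b.sum_repr' x]
    simp only [map_sum, map_smul, hT, smul_smul, mul_comm]
  simp only [hTx, inner_sum, real_inner_smul_right, real_inner_comm x, mul_assoc, sq]

theorem inner_self_apply_le_of_mem_span_image (hT : ∀ k, T (b k) = μ k • b k) {s : Set ι}
    {c : ℝ} (hc : ∀ k ∈ s, μ k ≤ c) {x : E} (hx : x ∈ Submodule.span ℝ (b '' s)) :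
    ⟪x, T x⟫ ≤ c * ‖x‖ ^ 2 := by
  rw [b.inner_self_apply_eq_sum hT, ← b.sum_sq_inner_right x, mul_sum]
  refine sum_le_sum fun k _ ↦ ?_
  by_cases hk : k ∈ s
  · exact mul_le_mul_of_nonneg_right (hc k hk) (sq_nonneg _)
  · simp [b.inner_eq_zero_of_mem_span_image hx hk]

theorem le_inner_self_apply_of_mem_span_image (hT : ∀ k, T (b k) = μ k • b k) {s : Set ι}
    {c : ℝ} (hc : ∀ k ∈ s, c ≤ μ k) {x : E} (hx : x ∈ Submodule.span ℝ (b '' s)) :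
    c * ‖x‖ ^ 2 ≤ ⟪x, T x⟫ := by
  rw [b.inner_self_apply_eq_sum hT, ← b.sum_sq_inner_right x, mul_sum]
  refine sum_le_sum fun k _ ↦ ?_
  by_cases hk : k ∈ s
  · exact mul_le_mul_of_nonneg_right (hc k hk) (sq_nonneg _)
  · simp [b.inner_eq_zero_of_mem_span_image hx hk]

end OrthonormalBasis

theorem weyl_inequality_of_orthonormalBasis {E : Type*} [NormedAddCommGroup E]
    [InnerProductSpace ℝ E] {n : ℕ} {A B : E →ₗ[ℝ] E} {bA bB bS : OrthonormalBasis (Fin n) ℝ E}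
    {α β γ : Fin n → ℝ} (hα : Antitone α) (hβ : Antitone β) (hγ : Antitone γ)
    (hA : ∀ k, A (bA k) = α k • bA k) (hB : ∀ k, B (bB k) = β k • bB k)
    (hS : ∀ k, (A + B) (bS k) = γ k • bS k) {i k l : Fin n} (hikl : (i : ℕ) + k ≤ l) :
    γ l ≤ α i + β k := by
  have : FiniteDimensional ℝ E := Module.Finite.of_basis bA.toBasis
  have hn : Module.finrank ℝ E = n := by simpa using Module.finrank_eq_card_basis bA.toBasis
  obtain ⟨x, ⟨⟨hxA, hxB⟩, hxS⟩, hx0⟩ := Submodule.exists_mem_inf_inf_ne_zero_of_finrank_lt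
    (Submodule.span ℝ (bA '' ↑(Ici i))) (Submodule.span ℝ (bB '' ↑(Ici k)))
    (Submodule.span ℝ (bS '' ↑(Iic l))) (by
      simp only [OrthonormalBasis.finrank_span_image, hn, Fin.card_Ici, Fin.card_Iic]
      omega)
  have key : γ l * ‖x‖ ^ 2 ≤ (α i + β k) * ‖x‖ ^ 2 := calc
    γ l * ‖x‖ ^ 2 ≤ ⟪x, (A + B) x⟫ :=
      bS.le_inner_self_apply_of_mem_span_image hS (fun m hm ↦ hγ (mem_Iic.mp hm)) hxS
    _ = ⟪x, A x⟫ + ⟪x, B x⟫ := by rw [LinearMap.add_apply, inner_add_right]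
    _ ≤ α i * ‖x‖ ^ 2 + β k * ‖x‖ ^ 2 := add_le_add
      (bA.inner_self_apply_le_of_mem_span_image hA (fun m hm ↦ hα (mem_Ici.mp hm)) hxA)
      (bB.inner_self_apply_le_of_mem_span_image hB (fun m hm ↦ hβ (mem_Ici.mp hm)) hxB)
    _ = (α i + β k) * ‖x‖ ^ 2 := (add_mul _ _ _).symm
  exact le_of_mul_le_mul_right key (by positivity)

theorem Matrix.IsHermitian.exists_orthonormalBasis_toEuclideanLin_apply {ι : Type*} [Fintype ι]
    [DecidableEq ι] {A : Matrix ι ι ℝ} (hA : A.IsHermitian) {α : ι → ℝ}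
    (hα : univ.val.map α = univ.val.map hA.eigenvalues) :
    ∃ b : OrthonormalBasis ι ℝ (EuclideanSpace ℝ ι), ∀ k, toEuclideanLin A (b k) = α k • b k := by
  obtain ⟨σ, hσ⟩ := Fintype.exists_perm_comp_eq_of_map_univ_eq hα
  refine ⟨hA.eigenvectorBasis.reindex σ.symm, fun k ↦ ?_⟩
  rw [OrthonormalBasis.reindex_apply, Equiv.symm_symm, ← hσ, toLpLin_apply,
    hA.mulVec_eigenvectorBasis]
  rfl

/-- **Weyl's inequality.** If `S = M + N` with `M, N` real symmetric, and
`α, β, γ` enumerate the eigenvalues (with multiplicity) of `M, N, S` in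
decreasing order, then `γ_j ≤ α_i + β_{j−i+1}` for all `i ≤ j`
(0-based: `γ j ≤ α i + β (j−i)`). -/
theorem weyl_inequality (n : ℕ) (M N : Matrix (Fin n) (Fin n) ℝ)
    (hM : M.IsHermitian) (hN : N.IsHermitian) (hS : (M + N).IsHermitian)
    (α β γ : Fin n → ℝ)
    (hα : Antitone α) (hβ : Antitone β) (hγ : Antitone γ)
    (hαe : Finset.univ.val.map α = Finset.univ.val.map hM.eigenvalues)
    (hβe : Finset.univ.val.map β = Finset.univ.val.map hN.eigenvalues)
    (hγe : Finset.univ.val.map γ = Finset.univ.val.map hS.eigenvalues)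
    (i j : Fin n) (hij : i ≤ j) :
    γ j ≤ α i + β ⟨(j : ℕ) - (i : ℕ), Nat.lt_of_le_of_lt (Nat.sub_le _ _) j.isLt⟩ := by
  obtain ⟨bM, hbM⟩ := hM.exists_orthonormalBasis_toEuclideanLin_apply hαe
  obtain ⟨bN, hbN⟩ := hN.exists_orthonormalBasis_toEuclideanLin_apply hβe
  obtain ⟨bS, hbS⟩ := hS.exists_orthonormalBasis_toEuclideanLin_apply hγe
  rw [map_add] at hbS
  exact weyl_inequality_of_orthonormalBasis hα hβ hγ hbM hbN hbS (by dsimp only; omega)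
end

section
/- Let ν ≥ 1, let b_1,…,b_ν be real with b_k ≠ 0 for at least one k, let 0 < ω_1 ≤ … ≤ ω_ν, and let s_e > 0. Define b̃ = Σ_{k=1}^{ν} b_k²/(ω_k+s_e), ẽ = Σ_{k=1}^{ν} b_k²/(ω_k+s_e)², ã = Σ_{k=1}^{ν} b_k² ω_k/(ω_k+s_e)², h_ν(s) = Σ_{k=1}^{ν} b_k²/(s+ω_k), and h_{νk}(s) = b̃²/(s·ẽ + ã). Then as the real frequency ω tends to +∞, the ratio h_{νk}(iω)/h_ν(iω) converges to the real number L = (b̃²/ẽ)/(Σ_{k=1}^{ν} b_k²), which satisfies 0 < L ≤ 1; consequently the Krylov error term e_{νk}(iω) = (h_{νk}(iω) − h_ν(iω))/h_ν(iω) converges to L − 1 and lim_{ω→∞} |e_{νk}(iω)| < 1. -/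
/-!
At high frequency both transfer functions behave like `c / s`: `s · h_ν(s) → Σ b_k²` and
`s · h_{νk}(s) → b̃² / ẽ`, so their ratio tends to `L = (b̃² / ẽ) / Σ b_k²`. Cauchy–Schwarz,
`(Σ b_k · b_k / (ω_k + s_e))² ≤ Σ b_k² · Σ b_k² / (ω_k + s_e)²`, gives `L ≤ 1`, and `L > 0`
because every `ω_k + s_e` is positive; hence `|L - 1| < 1`.
-/

open Complex Finset Filter Topology Bornology

section Cobounded

variable {𝕜 : Type*} [NormedField 𝕜]

theorem tendsto_mul_div_mul_add_cobounded (a d : 𝕜) {c : 𝕜} (hc : c ≠ 0) :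
    Tendsto (fun z => z * (a / (z * c + d))) (cobounded 𝕜) (𝓝 (a / c)) := by
  have hden : Tendsto (fun z => c + d * z⁻¹) (cobounded 𝕜) (𝓝 c) := by
    simpa using tendsto_const_nhds.add (tendsto_inv₀_cobounded.const_mul d)
  refine ((tendsto_const_nhds (x := a)).div hden hc).congr' ?_
  filter_upwards [eventually_ne_cobounded 0] with z hz
  rw [Pi.div_apply, show c + d * z⁻¹ = (z * c + d) / z by field_simp, div_div_eq_mul_div]
  ring

theorem tendsto_mul_sum_sq_div_add_cobounded {ι : Type*} [Fintype ι] (b ω : ι → 𝕜) :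
    Tendsto (fun z => z * ∑ k, b k ^ 2 / (z + ω k)) (cobounded 𝕜) (𝓝 (∑ k, b k ^ 2)) := by
  simp_rw [Finset.mul_sum]
  refine tendsto_finsetSum _ fun k _ => ?_
  simpa using tendsto_mul_div_mul_add_cobounded (b k ^ 2) (ω k) one_ne_zero

variable {f g : 𝕜 → 𝕜} {A B : 𝕜}

theorem tendsto_div_of_tendsto_mul_cobounded (hf : Tendsto (fun z => z * f z) (cobounded 𝕜) (𝓝 A))
    (hg : Tendsto (fun z => z * g z) (cobounded 𝕜) (𝓝 B)) (hB : B ≠ 0) :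
    Tendsto (fun z => f z / g z) (cobounded 𝕜) (𝓝 (A / B)) := by
  refine (hf.div hg hB).congr' ?_
  filter_upwards [eventually_ne_cobounded 0] with z hz
  exact mul_div_mul_left _ _ hz

theorem tendsto_sub_div_of_tendsto_mul_cobounded
    (hf : Tendsto (fun z => z * f z) (cobounded 𝕜) (𝓝 A))
    (hg : Tendsto (fun z => z * g z) (cobounded 𝕜) (𝓝 B)) (hB : B ≠ 0) :
    Tendsto (fun z => (f z - g z) / g z) (cobounded 𝕜) (𝓝 (A / B - 1)) := by
  refine ((tendsto_div_of_tendsto_mul_cobounded hf hg hB).sub_const 1).congr' ?_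
  filter_upwards [hg.eventually_ne hB] with z hz
  rw [sub_div, div_self (right_ne_zero_of_mul hz)]

end Cobounded

theorem Complex.tendsto_I_mul_ofReal_atTop_cobounded :
    Tendsto (fun w : ℝ => I * w) atTop (cobounded ℂ) :=
  (tendsto_mul_left_cobounded I_ne_zero).comp (RCLike.tendsto_ofReal_atTop_cobounded ℂ)

section KrylovRatio

variable {ι : Type*} [Fintype ι] (b : ι → ℝ)

theorem sum_sq_div_pos (hb : ∃ k, b k ≠ 0) {c : ι → ℝ} (hc : ∀ k, 0 < c k) :
    0 < ∑ k, b k ^ 2 / c k := by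
  obtain ⟨k₀, hk₀⟩ := hb
  exact sum_pos' (fun k _ => div_nonneg (sq_nonneg _) (hc k).le)
    ⟨k₀, mem_univ _, div_pos (by positivity) (hc k₀)⟩

theorem sum_sq_pos (hb : ∃ k, b k ≠ 0) : 0 < ∑ k, b k ^ 2 := by
  simpa using sum_sq_div_pos b hb fun _ => one_pos

theorem sq_sum_sq_div_le (c : ι → ℝ) :
    (∑ k, b k ^ 2 / c k) ^ 2 ≤ (∑ k, b k ^ 2) * ∑ k, b k ^ 2 / c k ^ 2 := by
  calc (∑ k, b k ^ 2 / c k) ^ 2 = (∑ k, b k * (b k / c k)) ^ 2 := by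
        congr 1; exact sum_congr rfl fun k _ => by ring
    _ ≤ (∑ k, b k ^ 2) * ∑ k, (b k / c k) ^ 2 := sum_mul_sq_le_sq_mul_sq univ b _
    _ = (∑ k, b k ^ 2) * ∑ k, b k ^ 2 / c k ^ 2 := by
        congr 1; exact sum_congr rfl fun k _ => by ring

/-- The constant `L = (b̃² / ẽ) / Σ b_k²` of the paper, with `c_k = ω_k + s_e`. -/
noncomputable def krylovRatio (c : ι → ℝ) : ℝ :=
  (∑ k, b k ^ 2 / c k) ^ 2 / (∑ k, b k ^ 2 / c k ^ 2) / ∑ k, b k ^ 2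

theorem krylovRatio_mem_Ioc (hb : ∃ k, b k ≠ 0) {c : ι → ℝ} (hc : ∀ k, 0 < c k) :
    krylovRatio b c ∈ Set.Ioc 0 1 := by
  have hB := sum_sq_pos b hb
  have hE : 0 < ∑ k, b k ^ 2 / c k ^ 2 := sum_sq_div_pos b hb fun k => pow_pos (hc k) 2
  refine ⟨div_pos (div_pos (pow_pos (sum_sq_div_pos b hb hc) 2) hE) hB, ?_⟩
  rw [krylovRatio, div_le_one hB, div_le_iff₀ hE]
  exact sq_sum_sq_div_le b c

end KrylovRatio

theorem krylov_error_limit_at_infinity_general (ν : ℕ) (hν : 1 ≤ ν) (b ω : Fin ν → ℝ)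
    (hb : ∃ k, b k ≠ 0) (hωpos : 0 < ω ⟨0, hν⟩) (hωmono : Monotone ω)
    (se : ℝ) (hse : 0 < se)
    (btil etil atil L : ℝ)
    (hbtil : btil = ∑ k, (b k) ^ 2 / (ω k + se))
    (hetil : etil = ∑ k, (b k) ^ 2 / (ω k + se) ^ 2)
    (hL : L = (btil ^ 2 / etil) / ∑ k, (b k) ^ 2)
    (hνfun hνkfun eνk : ℂ → ℂ)
    (hhν : ∀ s : ℂ, hνfun s = ∑ k, ((b k : ℂ)) ^ 2 / (s + (ω k : ℂ)))
    (hhνk : ∀ s : ℂ, hνkfun s = (btil : ℂ) ^ 2 / (s * (etil : ℂ) + (atil : ℂ)))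
    (heνk : ∀ s : ℂ, eνk s = (hνkfun s - hνfun s) / hνfun s) :
    Tendsto (fun w : ℝ => hνkfun (Complex.I * w) / hνfun (Complex.I * w))
        atTop (𝓝 (L : ℂ)) ∧
      (0 < L ∧ L ≤ 1) ∧
      Tendsto (fun w : ℝ => eνk (Complex.I * w)) atTop (𝓝 ((L : ℂ) - 1)) ∧
      Tendsto (fun w : ℝ => ‖eνk (Complex.I * w)‖) atTop
        (𝓝 |L - 1|) ∧
      |L - 1| < 1 := by
  have hc : ∀ k, 0 < ω k + se := fun k => add_pos (hωpos.trans_le (hωmono (Nat.zero_le k))) hse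
  have hLmem : L ∈ Set.Ioc 0 1 := by
    rw [hL, hbtil, hetil]
    exact krylovRatio_mem_Ioc b hb hc
  have hE : (etil : ℂ) ≠ 0 :=
    ofReal_ne_zero.2 (hetil ▸ sum_sq_div_pos b hb fun k => pow_pos (hc k) 2).ne'
  have hB : ∑ k, (b k : ℂ) ^ 2 ≠ 0 := by exact_mod_cast (sum_sq_pos b hb).ne'
  have hνlim : Tendsto (fun z => z * hνfun z) (cobounded ℂ) (𝓝 (∑ k, (b k : ℂ) ^ 2)) := by
    simpa only [hhν] using tendsto_mul_sum_sq_div_add_cobounded _ _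
  have hνklim : Tendsto (fun z => z * hνkfun z) (cobounded ℂ) (𝓝 ((btil : ℂ) ^ 2 / etil)) := by
    simpa only [hhνk] using tendsto_mul_div_mul_add_cobounded _ _ hE
  have hLc : (L : ℂ) = (btil : ℂ) ^ 2 / etil / ∑ k, (b k : ℂ) ^ 2 := by
    rw [hL]; push_cast; rfl
  have he : Tendsto (fun z => eνk z) (cobounded ℂ) (𝓝 (L - 1)) := by
    simpa only [heνk, hLc] using tendsto_sub_div_of_tendsto_mul_cobounded hνklim hνlim hB
  have hnorm : ‖(L : ℂ) - 1‖ = |L - 1| := by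
    rw [← ofReal_one, ← ofReal_sub, norm_real, Real.norm_eq_abs]
  refine ⟨?_, hLmem, he.comp tendsto_I_mul_ofReal_atTop_cobounded,
    hnorm ▸ he.norm.comp tendsto_I_mul_ofReal_atTop_cobounded, ?_⟩
  · rw [hLc]
    exact (tendsto_div_of_tendsto_mul_cobounded hνklim hνlim hB).comp
      tendsto_I_mul_ofReal_atTop_cobounded
  · rw [abs_sub_lt_iff]
    constructor <;> linarith [hLmem.1, hLmem.2]

/-- **Step 1 of the KMS error-bound proof.** As the real frequency `ω → ∞`,
the ratio `h_{νk}(iω)/h_ν(iω)` converges to `L = (b̃²/ẽ)/(Σ b_k²)` with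
`0 < L ≤ 1`; hence the Krylov error term `e_{νk}(iω)` converges to `L − 1`
and its limiting magnitude is strictly below 1. -/
theorem krylov_error_limit_at_infinity (ν : ℕ) (hν : 1 ≤ ν) (b ω : Fin ν → ℝ)
    (hb : ∃ k, b k ≠ 0) (hωpos : 0 < ω ⟨0, hν⟩) (hωmono : Monotone ω)
    (se : ℝ) (hse : 0 < se)
    (btil etil atil L : ℝ)
    (hbtil : btil = ∑ k, (b k) ^ 2 / (ω k + se))
    (hetil : etil = ∑ k, (b k) ^ 2 / (ω k + se) ^ 2)
    (hatil : atil = ∑ k, (b k) ^ 2 * ω k / (ω k + se) ^ 2)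
    (hL : L = (btil ^ 2 / etil) / ∑ k, (b k) ^ 2)
    (hνfun hνkfun eνk : ℂ → ℂ)
    (hhν : ∀ s : ℂ, hνfun s = ∑ k, ((b k : ℂ)) ^ 2 / (s + (ω k : ℂ)))
    (hhνk : ∀ s : ℂ, hνkfun s = (btil : ℂ) ^ 2 / (s * (etil : ℂ) + (atil : ℂ)))
    (heνk : ∀ s : ℂ, eνk s = (hνkfun s - hνfun s) / hνfun s) :
    Tendsto (fun w : ℝ => hνkfun (Complex.I * w) / hνfun (Complex.I * w))
        atTop (𝓝 (L : ℂ)) ∧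
      (0 < L ∧ L ≤ 1) ∧
      Tendsto (fun w : ℝ => eνk (Complex.I * w)) atTop (𝓝 ((L : ℂ) - 1)) ∧
      Tendsto (fun w : ℝ => ‖eνk (Complex.I * w)‖) atTop
        (𝓝 |L - 1|) ∧
      |L - 1| < 1 :=
  krylov_error_limit_at_infinity_general ν hν b ω hb hωpos hωmono se hse btil etil atil L hbtil
    hetil hL hνfun hνkfun eνk hhν hhνk heνk
end
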